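/- arXiv:2206.07361 — 9 statements merged into one kernel-verified Lean document; each statement's English description precedes it below -/
import Mathlib

section
/- Let X be a proper geodesic metric space and Y ⊆ X an α-contracting closed subset (any geodesic at distance ≥ α from Y has projection onto Y of diameter ≤ α). Then any geodesic γ joining two points of the α-neighborhood of Y lies in the (5α/2)-neighborhood of Y. -/
open Metric Set MeasureTheory

variable {X : Type*} [MetricSpace X]

/-- A map `γ` is a geodesic on the parameter set `s`. -/
def IsGeodesicOn (γ : ℝ → X) (s : Set ℝ) : Prop :=
  ∀ t ∈ s, ∀ t' ∈ s, dist (γ t) (γ t') = |t - t'|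

/-- The set of nearest-point projections of points of `Z` onto `Y`. -/
def projSet (Y Z : Set X) : Set X :=
  {y | y ∈ Y ∧ ∃ z ∈ Z, dist z y = Metric.infDist z Y}

/-- `Y` is an `α`-contracting closed subset: any geodesic at distance `≥ α` from `Y`
has projection onto `Y` of diameter `≤ α`. -/
def IsContractingSet (α : ℝ) (Y : Set X) : Prop :=
  IsClosed Y ∧ ∀ (γ : ℝ → X) (s : Set ℝ), IsGeodesicOn γ s →
    (∀ t ∈ s, α ≤ Metric.infDist (γ t) Y) →
    Metric.diam (projSet Y (γ '' s)) ≤ α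

/-- `X` is a geodesic space: any two points are joined by a geodesic. -/
def GeodesicSpace (X : Type*) [MetricSpace X] : Prop :=
  ∀ x y : X, ∃ γ : ℝ → X, γ 0 = x ∧ γ (dist x y) = y ∧
    IsGeodesicOn γ (Set.Icc 0 (dist x y))

/-- Quasi-convexity of contracting sets: any geodesic joining two points of the
`α`-neighborhood of an `α`-contracting set `Y` lies in the `5α/2`-neighborhood of `Y`. -/
theorem contracting_quasi_convex [ProperSpace X] (hX : GeodesicSpace X)
    {α : ℝ} (hα : 0 < α) {Y : Set X} (hY : IsContractingSet α Y)
    {a b : ℝ} (γ : ℝ → X) (hγ : IsGeodesicOn γ (Set.Icc a b))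
    (ha : Metric.infDist (γ a) Y ≤ α) (hb : Metric.infDist (γ b) Y ≤ α) :
    ∀ t ∈ Set.Icc a b, Metric.infDist (γ t) Y ≤ 5 * α / 2 := by
  intro t ht
  rcases Y.eq_empty_or_nonempty with hYe | hYne
  · simp only [hYe, Metric.infDist_empty]
    positivity
  set f : ℝ → ℝ := fun s => Metric.infDist (γ s) Y with hf
  show f t ≤ 5 * α / 2
  by_cases hft : f t ≤ α
  · linarith
  push_neg at hft
  obtain ⟨hat, htb⟩ := ht
  -- f is 1-Lipschitz on [a,b]
  have hlip : ∀ s ∈ Icc a b, ∀ s' ∈ Icc a b, f s ≤ f s' + |s - s'| := by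
    intro s hs s' hs'
    calc f s ≤ f s' + dist (γ s) (γ s') := Metric.infDist_le_infDist_add_dist
    _ = f s' + |s - s'| := by rw [hγ s hs s' hs']
  have hcont : ContinuousOn f (Icc a b) := by
    refine (LipschitzOnWith.of_dist_le_mul (K := 1) ?_).continuousOn
    intro s hs s' hs'
    rw [Real.dist_eq, Real.dist_eq, NNReal.coe_one, one_mul, abs_sub_le_iff]
    refine ⟨by linarith [hlip s hs s' hs'], ?_⟩
    have := hlip s' hs' s hs
    rw [abs_sub_comm] at this
    linarith
  have hlip' : ∀ s ∈ Icc a b, ∀ s' ∈ Icc a b, f s ≤ f s' + |s - s'| := hlip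
  -- left endpoint u
  set A : Set ℝ := Icc a t ∩ f ⁻¹' (Iic α) with hA
  have hAclosed : IsClosed A :=
    (hcont.mono (Icc_subset_Icc_right htb)).preimage_isClosed_of_isClosed
      isClosed_Icc isClosed_Iic
  have hAne : A.Nonempty := ⟨a, ⟨le_refl a, hat⟩, ha⟩
  have hAbdd : BddAbove A := ⟨t, fun s hs => hs.1.2⟩
  set u : ℝ := sSup A with hu
  have huA : u ∈ A := hAclosed.csSup_mem hAne hAbdd
  have hau : a ≤ u := huA.1.1
  have hut : u ≤ t := huA.1.2
  have hfu_le : f u ≤ α := huA.2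
  have hub : u ∈ Icc a b := ⟨hau, hut.trans htb⟩
  have hgtA : ∀ s, u < s → s ≤ t → α < f s := by
    intro s hus hst
    by_contra h
    push_neg at h
    exact absurd (le_csSup hAbdd ⟨⟨hau.trans hus.le, hst⟩, h⟩) (not_le.mpr hus)
  have hut' : u < t := lt_of_le_of_ne hut (fun h => by rw [h] at hfu_le; linarith)
  have hfu_ge : α ≤ f u := by
    refine le_of_forall_pos_le_add fun ε hε => ?_
    set s := min (u + ε) t with hs
    have hus : u < s := lt_min (by linarith) hut'
    have hst : s ≤ t := min_le_right _ _
    have hsab : s ∈ Icc a b := ⟨hau.trans hus.le, hst.trans htb⟩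
    have h1 : α < f s := hgtA s hus hst
    have h2 : f s ≤ f u + |s - u| := hlip s hsab u hub
    have h3 : |s - u| ≤ ε := by
      rw [abs_of_pos (by linarith)]
      have : s ≤ u + ε := min_le_left _ _
      linarith
    linarith
  -- right endpoint v
  set B : Set ℝ := Icc t b ∩ f ⁻¹' (Iic α) with hB
  have hBclosed : IsClosed B :=
    (hcont.mono (Icc_subset_Icc_left hat)).preimage_isClosed_of_isClosed
      isClosed_Icc isClosed_Iic
  have hBne : B.Nonempty := ⟨b, ⟨htb, le_refl b⟩, hb⟩
  have hBbdd : BddBelow B := ⟨t, fun s hs => hs.1.1⟩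
  set v : ℝ := sInf B with hv
  have hvB : v ∈ B := hBclosed.csInf_mem hBne hBbdd
  have htv : t ≤ v := hvB.1.1
  have hvb : v ≤ b := hvB.1.2
  have hfv_le : f v ≤ α := hvB.2
  have hvab : v ∈ Icc a b := ⟨hat.trans htv, hvb⟩
  have hgtB : ∀ s, t ≤ s → s < v → α < f s := by
    intro s hst hsv
    by_contra h
    push_neg at h
    exact absurd (csInf_le hBbdd ⟨⟨hst, hsv.le.trans hvb⟩, h⟩) (not_le.mpr hsv)
  have htv' : t < v := lt_of_le_of_ne htv (fun h => by rw [← h] at hfv_le; linarith)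
  have hfv_ge : α ≤ f v := by
    refine le_of_forall_pos_le_add fun ε hε => ?_
    set s := max (v - ε) t with hs
    have hsv : s < v := max_lt (by linarith) htv'
    have hts : t ≤ s := le_max_right _ _
    have hsab : s ∈ Icc a b := ⟨hat.trans hts, hsv.le.trans hvb⟩
    have h1 : α < f s := hgtB s hts hsv
    have h2 : f s ≤ f v + |s - v| := hlip s hsab v hvab
    have h3 : |s - v| ≤ ε := by
      rw [abs_of_nonpos (by linarith), neg_sub]
      have : v - ε ≤ s := le_max_left _ _
      linarith
    linarith
  have huv : u ≤ v := hut.trans htv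
  have hIcc : Icc u v ⊆ Icc a b := Icc_subset_Icc hau hvb
  -- distance ≥ α on [u,v]
  have hmid : ∀ s ∈ Icc u v, α ≤ f s := by
    intro s hs
    rcases le_or_gt s t with h | h
    · rcases eq_or_lt_of_le hs.1 with h' | h'
      · rw [← h']; exact hfu_ge
      · exact (hgtA s h' h).le
    · rcases eq_or_lt_of_le hs.2 with h' | h'
      · rw [h']; exact hfv_ge
      · exact (hgtB s h.le h').le
  -- apply contracting property
  have hγ' : IsGeodesicOn γ (Icc u v) := fun s hs s' hs' => hγ s (hIcc hs) s' (hIcc hs')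
  have hdiam : Metric.diam (projSet Y (γ '' Icc u v)) ≤ α := hY.2 γ (Icc u v) hγ' hmid
  -- projections of γ u and γ v
  obtain ⟨pu, hpuY, hpu⟩ := hY.1.exists_infDist_eq_dist hYne (γ u)
  obtain ⟨pv, hpvY, hpv⟩ := hY.1.exists_infDist_eq_dist hYne (γ v)
  have hpu_mem : pu ∈ projSet Y (γ '' Icc u v) :=
    ⟨hpuY, γ u, ⟨u, ⟨le_refl u, huv⟩, rfl⟩, hpu.symm⟩
  have hpv_mem : pv ∈ projSet Y (γ '' Icc u v) :=
    ⟨hpvY, γ v, ⟨v, ⟨huv, le_refl v⟩, rfl⟩, hpv.symm⟩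
  -- boundedness of the projection set
  have hbd : Bornology.IsBounded (projSet Y (γ '' Icc u v)) := by
    refine (Metric.isBounded_closedBall (x := γ u) (r := α + 2 * (v - u))).subset ?_
    rintro y ⟨hyY, z, ⟨s, hsuv, rfl⟩, hzy⟩
    have hsab : s ∈ Icc a b := hIcc hsuv
    have h1 : dist (γ s) (γ u) = |s - u| := hγ s hsab u hub
    have h2 : |s - u| ≤ v - u := by
      rw [abs_of_nonneg (by linarith [hsuv.1])]
      linarith [hsuv.2]
    have h3 : f s ≤ f u + |s - u| := hlip s hsab u hub
    rw [Metric.mem_closedBall, dist_comm]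
    calc dist (γ u) y ≤ dist (γ u) (γ s) + dist (γ s) y := dist_triangle _ _ _
    _ = dist (γ s) (γ u) + f s := by rw [dist_comm, hzy]
    _ ≤ (v - u) + (f u + |s - u|) := by rw [h1]; linarith
    _ ≤ α + 2 * (v - u) := by linarith
  have hpupv : dist pu pv ≤ α :=
    (Metric.dist_le_diam_of_mem hbd hpu_mem hpv_mem).trans hdiam
  -- v - u ≤ 3α
  have hduv : dist (γ u) (γ v) = v - u := by
    rw [hγ u hub v hvab, abs_of_nonpos (by linarith), neg_sub]
  have hdu : dist (γ u) pu = f u := hpu.symm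
  have hdv : dist (γ v) pv = f v := hpv.symm
  have hvu3 : v - u ≤ 3 * α := by
    have := dist_triangle4 (γ u) pu pv (γ v)
    rw [hduv, hdu] at this
    rw [dist_comm pv (γ v)] at this
    rw [hdv] at this
    linarith
  -- conclude
  have htu : f t ≤ (t - u) + α := by
    have h1 : dist (γ t) (γ u) = t - u := by
      rw [hγ t ⟨hat, htb⟩ u hub, abs_of_nonneg (by linarith)]
    calc f t ≤ dist (γ t) pu := Metric.infDist_le_dist_of_mem hpuY
    _ ≤ dist (γ t) (γ u) + dist (γ u) pu := dist_triangle _ _ _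
    _ ≤ (t - u) + α := by rw [h1, hdu]; linarith
  have htvle : f t ≤ (v - t) + α := by
    have h1 : dist (γ t) (γ v) = v - t := by
      rw [hγ t ⟨hat, htb⟩ v hvab, abs_of_nonpos (by linarith), neg_sub]
    calc f t ≤ dist (γ t) pv := Metric.infDist_le_dist_of_mem hpvY
    _ ≤ dist (γ t) (γ v) + dist (γ v) pv := dist_triangle _ _ _
    _ ≤ (v - t) + α := by rw [h1, hdv]; linarith
  linarith
end

section
/- Let X be a proper geodesic metric space, Y ⊆ X an α-contracting closed set, x, y ∈ X, γ a geodesic from x to y, and p, q nearest-point projections of x and y onto Y respectively. If d(x, Y) < α or d(p, q) > α, then d(γ, Y) < α and d(x, y) ≥ d(x, p) + d(p, q) + d(q, y) − 8α. -/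
/-!
Let `t₁` be the first and `t₂` the last time at which `γ` enters the closed `α`-neighbourhood
of `Y`. If `γ` never came `α`-close to `Y`, contraction would force `d(p, q) ≤ α` and
`d(x, Y) ≥ α`. On `[0, t₁)` the geodesic stays `α`-far from `Y`, so all nearest-point
projections of `γ [0, t₁)` lie within `α` of `p`; letting the parameter tend to `t₁` gives
`d(p, γ t₁) ≤ 2α`, and symmetrically `d(q, γ t₂) ≤ 2α`. Four triangle inequalities along
`x, γ t₁, γ t₂, y` then lose at most `8α`.
-/

open Metric Set MeasureTheory

variable {X : Type*} [MetricSpace X]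

namespace IsGeodesicOn

variable {γ : ℝ → X} {s : Set ℝ}

theorem mono {t : Set ℝ} (hγ : IsGeodesicOn γ s) (hts : t ⊆ s) : IsGeodesicOn γ t :=
  fun a ha b hb => hγ a (hts ha) b (hts hb)

theorem dist_eq_sub (hγ : IsGeodesicOn γ s) {a b : ℝ} (ha : a ∈ s) (hb : b ∈ s) (hab : a ≤ b) :
    dist (γ a) (γ b) = b - a := by
  rw [hγ a ha b hb, abs_sub_comm, abs_of_nonneg (sub_nonneg.2 hab)]

theorem comp_const_sub (hγ : IsGeodesicOn γ s) (c : ℝ) :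
    IsGeodesicOn (fun u => γ (c - u)) ((c - ·) ⁻¹' s) := by
  intro a ha b hb
  rw [hγ _ ha _ hb, sub_sub_sub_cancel_left, abs_sub_comm]

theorem lipschitzOnWith (hγ : IsGeodesicOn γ s) : LipschitzOnWith 1 γ s :=
  LipschitzOnWith.of_dist_le_mul fun a ha b hb => by
    rw [hγ a ha b hb, NNReal.coe_one, one_mul, Real.dist_eq]

theorem isBounded_image (hγ : IsGeodesicOn γ s) (hs : Bornology.IsBounded s) :
    Bornology.IsBounded (γ '' s) := by
  obtain ⟨C, hC⟩ := isBounded_iff.1 hs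
  refine isBounded_image_iff.2 ⟨C, fun a ha b hb => ?_⟩
  rw [hγ a ha b hb, ← Real.dist_eq]
  exact hC ha hb

end IsGeodesicOn

theorem isBounded_projSet {Y Z : Set X} (hZ : Bornology.IsBounded Z) (hY : Y.Nonempty) :
    Bornology.IsBounded (projSet Y Z) := by
  obtain ⟨p, hp⟩ := hY
  obtain ⟨r, hZr⟩ := hZ.subset_closedBall p
  refine (isBounded_closedBall (x := p) (r := 2 * r)).subset ?_
  rintro w ⟨-, z, hz, hzw⟩
  have hzp : dist z p ≤ r := hZr hz
  have hzw' : dist z w ≤ dist z p := hzw ▸ infDist_le_dist_of_mem hp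
  rw [mem_closedBall]
  linarith [dist_triangle w z p, dist_comm w z]

namespace IsContractingSet

variable {α : ℝ} {Y : Set X} {γ : ℝ → X} {s : Set ℝ}

theorem dist_le_of_mem_projSet (hY : IsContractingSet α Y) (hγ : IsGeodesicOn γ s)
    (hs : Bornology.IsBounded s) (hfar : ∀ t ∈ s, α ≤ infDist (γ t) Y) {a b : X}
    (ha : a ∈ projSet Y (γ '' s)) (hb : b ∈ projSet Y (γ '' s)) : dist a b ≤ α :=
  (dist_le_diam_of_mem (isBounded_projSet (hγ.isBounded_image hs) ⟨a, ha.1⟩) ha hb).trans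
    (hY.2 γ s hγ hfar)

theorem dist_le_add_infDist [ProperSpace X] (hY : IsContractingSet α Y) (hγ : IsGeodesicOn γ s)
    (hs : Bornology.IsBounded s) (hfar : ∀ t ∈ s, α ≤ infDist (γ t) Y) {p : X}
    (hp : p ∈ projSet Y (γ '' s)) {t : ℝ} (ht : t ∈ s) :
    dist p (γ t) ≤ α + infDist (γ t) Y := by
  obtain ⟨w, hw, hwt⟩ := hY.1.exists_infDist_eq_dist ⟨p, hp.1⟩ (γ t)
  have hpw : dist p w ≤ α :=
    hY.dist_le_of_mem_projSet hγ hs hfar hp ⟨hw, γ t, mem_image_of_mem γ ht, hwt.symm⟩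
  calc dist p (γ t) ≤ dist p w + dist w (γ t) := dist_triangle _ _ _
    _ ≤ α + infDist (γ t) Y := by rw [dist_comm w, ← hwt]; linarith

theorem dist_le_add_infDist_of_forall_lt [ProperSpace X] (hY : IsContractingSet α Y) {t₁ : ℝ}
    (ht₁ : 0 < t₁) (hγ : IsGeodesicOn γ (Icc 0 t₁)) {p : X} (hp : p ∈ Y)
    (hpγ : dist (γ 0) p = infDist (γ 0) Y) (hfar : ∀ t ∈ Ico 0 t₁, α ≤ infDist (γ t) Y) :
    dist p (γ t₁) ≤ α + infDist (γ t₁) Y := by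
  have hcl : closure (Ico 0 t₁) = Icc 0 t₁ := closure_Ico ht₁.ne
  have hcont : ContinuousOn γ (closure (Ico 0 t₁)) := hcl ▸ hγ.lipschitzOnWith.continuousOn
  have hpproj : p ∈ projSet Y (γ '' Ico 0 t₁) :=
    ⟨hp, γ 0, mem_image_of_mem γ ⟨le_rfl, ht₁⟩, hpγ⟩
  refine le_on_closure (fun t ht => hY.dist_le_add_infDist (hγ.mono Ico_subset_Icc_self)
      (isBounded_Ico 0 t₁) hfar hpproj ht)
    ((continuous_const.dist continuous_id).comp_continuousOn hcont)
    (continuousOn_const.add ((continuous_infDist_pt Y).comp_continuousOn hcont))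
    (hcl ▸ right_mem_Icc.2 ht₁.le)

/-- The first time `t ≤ t₀` at which `γ` is `α`-close to `Y` is at distance `≤ 2α` from `p`. -/
theorem exists_dist_le_two_mul [ProperSpace X] (hY : IsContractingSet α Y) {t₀ : ℝ}
    (ht₀ : 0 ≤ t₀) (hγ : IsGeodesicOn γ (Icc 0 t₀)) (hnear : infDist (γ t₀) Y ≤ α) {p : X}
    (hp : p ∈ Y) (hpγ : dist (γ 0) p = infDist (γ 0) Y) :
    ∃ t ∈ Icc 0 t₀, dist p (γ t) ≤ 2 * α := by
  set A := Icc 0 t₀ ∩ (fun t => infDist (γ t) Y) ⁻¹' Iic α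
  have hA : IsClosed A := ((continuous_infDist_pt Y).comp_continuousOn
    hγ.lipschitzOnWith.continuousOn).preimage_isClosed_of_isClosed isClosed_Icc isClosed_Iic
  obtain ⟨t₁, ⟨ht₁, hnear₁⟩, hleast⟩ :=
    (isCompact_Icc.of_isClosed_subset hA inter_subset_left).exists_isLeast
      ⟨t₀, right_mem_Icc.2 ht₀, hnear⟩
  refine ⟨t₁, ht₁, ?_⟩
  rcases ht₁.1.eq_or_lt with h0 | hpos
  · rw [← h0, dist_comm, hpγ]
    linarith [infDist_nonneg (x := γ 0) (s := Y), show infDist (γ 0) Y ≤ α from h0 ▸ hnear₁]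
  have hfar : ∀ t ∈ Ico 0 t₁, α ≤ infDist (γ t) Y := fun t ht => le_of_not_ge fun hle =>
    (hleast ⟨⟨ht.1, ht.2.le.trans ht₁.2⟩, hle⟩).not_gt ht.2
  have := hY.dist_le_add_infDist_of_forall_lt hpos (hγ.mono (Icc_subset_Icc_right ht₁.2)) hp
    hpγ hfar
  linarith [show infDist (γ t₁) Y ≤ α from hnear₁]

theorem exists_infDist_lt (hY : IsContractingSet α Y) {D : ℝ} (hD : 0 ≤ D)
    (hγ : IsGeodesicOn γ (Icc 0 D)) {p q : X} (hp : p ∈ Y) (hpγ : dist (γ 0) p = infDist (γ 0) Y)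
    (hq : q ∈ Y) (hqγ : dist (γ D) q = infDist (γ D) Y)
    (hcase : infDist (γ 0) Y < α ∨ α < dist p q) :
    ∃ t ∈ Icc 0 D, infDist (γ t) Y < α := by
  by_contra! hfar
  have hpq : dist p q ≤ α := hY.dist_le_of_mem_projSet hγ (isBounded_Icc 0 D) hfar
    ⟨hp, γ 0, mem_image_of_mem γ (left_mem_Icc.2 hD), hpγ⟩
    ⟨hq, γ D, mem_image_of_mem γ (right_mem_Icc.2 hD), hqγ⟩
  rcases hcase with h | h
  · exact (hfar 0 (left_mem_Icc.2 hD)).not_gt h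
  · exact hpq.not_gt h

end IsContractingSet

theorem IsGeodesicOn.dist_add_dist_add_dist_le {γ : ℝ → X} {D t₁ t₂ c : ℝ}
    (hγ : IsGeodesicOn γ (Icc 0 D)) (ht₁ : 0 ≤ t₁) (ht₁₂ : t₁ ≤ t₂) (ht₂ : t₂ ≤ D) {p q : X}
    (hp : dist p (γ t₁) ≤ c) (hq : dist q (γ t₂) ≤ c) :
    dist (γ 0) p + dist p q + dist q (γ D) ≤ D + 4 * c := by
  have h₀ : (0 : ℝ) ∈ Icc 0 D := ⟨le_rfl, ht₁.trans (ht₁₂.trans ht₂)⟩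
  have h₁ : t₁ ∈ Icc 0 D := ⟨ht₁, ht₁₂.trans ht₂⟩
  have h₂ : t₂ ∈ Icc 0 D := ⟨ht₁.trans ht₁₂, ht₂⟩
  have h₃ : D ∈ Icc 0 D := ⟨h₀.2, le_rfl⟩
  have hxp := dist_triangle (γ 0) (γ t₁) p
  have hpq := dist_triangle4 p (γ t₁) (γ t₂) q
  have hqy := dist_triangle q (γ t₂) (γ D)
  rw [hγ.dist_eq_sub h₀ h₁ ht₁, dist_comm (γ t₁)] at hxp
  rw [hγ.dist_eq_sub h₁ h₂ ht₁₂, dist_comm (γ t₂)] at hpq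
  rw [hγ.dist_eq_sub h₂ h₃ ht₂] at hqy
  linarith

theorem contracting_projection_general [ProperSpace X]
    {α : ℝ} {Y : Set X} (hY : IsContractingSet α Y)
    {x y p q : X} (hp : p ∈ Y) (hpx : dist x p = Metric.infDist x Y)
    (hq : q ∈ Y) (hqy : dist y q = Metric.infDist y Y)
    (γ : ℝ → X) (hγ : IsGeodesicOn γ (Set.Icc 0 (dist x y)))
    (hγ0 : γ 0 = x) (hγ1 : γ (dist x y) = y)
    (hcase : Metric.infDist x Y < α ∨ α < dist p q) :
    (∃ t ∈ Set.Icc (0 : ℝ) (dist x y), Metric.infDist (γ t) Y < α) ∧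
      dist x p + dist p q + dist q y - 8 * α ≤ dist x y := by
  have hD : 0 ≤ dist x y := dist_nonneg
  have hpγ : dist (γ 0) p = infDist (γ 0) Y := by rw [hγ0]; exact hpx
  have hqγ : dist (γ (dist x y)) q = infDist (γ (dist x y)) Y := by rw [hγ1]; exact hqy
  obtain ⟨t₀, ht₀, hnear⟩ := hY.exists_infDist_lt hD hγ hp hpγ hq hqγ (by rwa [hγ0])
  refine ⟨⟨t₀, ht₀, hnear⟩, ?_⟩
  obtain ⟨t₁, ht₁, hpt₁⟩ := hY.exists_dist_le_two_mul ht₀.1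
    (hγ.mono (Icc_subset_Icc_right ht₀.2)) hnear.le hp hpγ
  have hγrev : IsGeodesicOn (fun u => γ (dist x y - u)) (Icc 0 (dist x y - t₀)) :=
    (hγ.comp_const_sub _).mono fun u hu =>
      show dist x y - u ∈ Icc 0 (dist x y) from ⟨by linarith [hu.2, ht₀.1], by linarith [hu.1]⟩
  obtain ⟨u, hu, hqu⟩ := hY.exists_dist_le_two_mul (sub_nonneg.2 ht₀.2) hγrev
    (by simpa using hnear.le) hq (by simpa using hqγ)
  replace hqu : dist q (γ (dist x y - u)) ≤ 2 * α := hqu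
  have := hγ.dist_add_dist_add_dist_le ht₁.1 (ht₁.2.trans (by linarith [hu.2]))
    (by linarith [hu.1]) hpt₁ hqu
  rw [hγ0, hγ1] at this
  linarith

/-- Projections onto a contracting set: if `d(x,Y) < α` or `d(p,q) > α`, then a geodesic
from `x` to `y` meets the `α`-neighborhood of `Y` and
`d(x,y) ≥ d(x,p) + d(p,q) + d(q,y) - 8α`. -/
theorem contracting_projection [ProperSpace X] (hX : GeodesicSpace X)
    {α : ℝ} (hα : 0 < α) {Y : Set X} (hY : IsContractingSet α Y)
    {x y p q : X} (hp : p ∈ Y) (hpx : dist x p = Metric.infDist x Y)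
    (hq : q ∈ Y) (hqy : dist y q = Metric.infDist y Y)
    (γ : ℝ → X) (hγ : IsGeodesicOn γ (Set.Icc 0 (dist x y)))
    (hγ0 : γ 0 = x) (hγ1 : γ (dist x y) = y)
    (hcase : Metric.infDist x Y < α ∨ α < dist p q) :
    (∃ t ∈ Set.Icc (0 : ℝ) (dist x y), Metric.infDist (γ t) Y < α) ∧
      dist x p + dist p q + dist q y - 8 * α ≤ dist x y :=
  contracting_projection_general hY hp hpx hq hqy γ hγ hγ0 hγ1 hcase
end

section
/- Let X be a proper geodesic metric space and c a cocycle in the horoboundary ∂X. For every x ∈ X there exists a gradient ray γ : ℝ₊ → X for c with γ(0) = x, i.e. a path parametrized by arc length satisfying c(γ(s), γ(t)) = t − s for all s ≤ t. -/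
open Metric Set MeasureTheory

variable {X : Type*} [MetricSpace X]

/-- The Busemann cocycle associated to the point `z`. -/
def busemann (z : X) : X → X → ℝ := fun x y => dist x z - dist y z

/-- The horocompactification of `X`: the closure of the set of Busemann cocycles. -/
def horocompactification (X : Type*) [MetricSpace X] : Set (X → X → ℝ) :=
  closure (Set.range (busemann (X := X)))

/-- The horoboundary of `X`. -/
def horoboundary (X : Type*) [MetricSpace X] : Set (X → X → ℝ) :=
  horocompactification X \ Set.range (busemann (X := X))

/-!
Approximate `c` by Busemann cocycles `busemann z`. Since `c` is not itself of the form
`busemann w`, the points `z` must escape every compact set, so geodesic segments from `x` to `z`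
become arbitrarily long. By properness these segments subconverge (along an ultrafilter) to a ray
from `x`; along each segment `busemann z (δ s) (δ t) = t - s` exactly, and this passes to the limit
because Busemann cocycles are 1-Lipschitz in each variable.
-/

open Filter Topology

lemma comap_nhds_neBot_of_mem_closure_range {α β : Type*} [TopologicalSpace β] {f : α → β}
    {b : β} (hb : b ∈ closure (range f)) : (comap f (𝓝 b)).NeBot :=
  comap_neBot fun _ ht => by
    obtain ⟨_, hat, a, rfl⟩ := mem_closure_iff_nhds.1 hb _ ht
    exact ⟨a, hat⟩

lemma comap_nhds_le_cocompact_of_notMem_range {α β : Type*} [TopologicalSpace α]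
    [TopologicalSpace β] [T2Space β] {f : α → β} (hf : Continuous f) {b : β}
    (hb : b ∉ range f) : comap f (𝓝 b) ≤ cocompact α := by
  refine ((basis_sets _).le_basis_iff hasBasis_cocompact).2 fun K hK => ?_
  have hbK : b ∉ f '' K := fun ⟨a, _, ha⟩ => hb ⟨a, ha⟩
  exact ⟨f ⁻¹' (f '' K)ᶜ, preimage_mem_comap ((hK.image hf).isClosed.compl_mem_nhds hbK),
    fun a ha haK => ha ⟨a, haK, rfl⟩⟩

lemma IsCompact.exists_tendsto_of_eventually_mem {α ι : Type*} [TopologicalSpace α]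
    {U : Ultrafilter ι} {f : ι → α} {K : Set α} (hK : IsCompact K) (hf : ∀ᶠ i in U, f i ∈ K) :
    ∃ a, Tendsto f U (𝓝 a) := by
  obtain ⟨a, -, ha⟩ := hK.ultrafilter_le_nhds' (U.map f) hf
  exact ⟨a, ha⟩

lemma continuous_busemann : Continuous (busemann : X → X → X → ℝ) :=
  continuous_pi fun _ => continuous_pi fun _ =>
    (continuous_const.dist continuous_id).sub (continuous_const.dist continuous_id)

lemma abs_busemann_sub_busemann_le (z a a' b b' : X) :
    |busemann z a b - busemann z a' b'| ≤ dist a a' + dist b b' := by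
  have ha := abs_dist_sub_le a a' z
  have hb := abs_dist_sub_le b b' z
  rw [abs_le] at ha hb ⊢
  unfold busemann
  constructor <;> linarith [ha.1, ha.2, hb.1, hb.2]

lemma Filter.Tendsto.busemann_apply {ι : Type*} {l : Filter ι} {z a b : ι → X}
    {c : X → X → ℝ} {p q : X} (hz : Tendsto (fun i => busemann (z i)) l (𝓝 c))
    (ha : Tendsto a l (𝓝 p)) (hb : Tendsto b l (𝓝 q)) :
    Tendsto (fun i => busemann (z i) (a i) (b i)) l (𝓝 (c p q)) := by
  have hpq : Tendsto (fun i => busemann (z i) p q) l (𝓝 (c p q)) :=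
    ((continuous_apply q).tendsto _).comp (((continuous_apply p).tendsto _).comp hz)
  refine hpq.congr_dist (squeeze_zero (g := fun i => dist (a i) p + dist (b i) q)
    (fun _ => dist_nonneg) (fun i => ?_) ?_)
  · rw [Real.dist_eq, abs_sub_comm]
    exact abs_busemann_sub_busemann_le (z i) (a i) p (b i) q
  · simpa using (tendsto_iff_dist_tendsto_zero.1 ha).add (tendsto_iff_dist_tendsto_zero.1 hb)

namespace IsGeodesicOn

variable {γ : ℝ → X} {R s t : ℝ}

lemma dist_eq_sub_s5 (hγ : IsGeodesicOn γ (Icc 0 R)) (hs : 0 ≤ s) (hst : s ≤ t) (htR : t ≤ R) :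
    dist (γ s) (γ t) = t - s := by
  rw [hγ s ⟨hs, hst.trans htR⟩ t ⟨hs.trans hst, htR⟩, abs_sub_comm, abs_of_nonneg (by linarith)]

lemma busemann_eq_sub (hγ : IsGeodesicOn γ (Icc 0 R)) (hs : 0 ≤ s) (hst : s ≤ t)
    (htR : t ≤ R) : busemann (γ R) (γ s) (γ t) = t - s := by
  unfold busemann
  rw [hγ.dist_eq_sub_s5 hs (hst.trans htR) le_rfl, hγ.dist_eq_sub_s5 (hs.trans hst) htR le_rfl]
  ring

end IsGeodesicOn

/-- Existence of gradient rays: for every cocycle `c` in the horoboundary and every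
`x ∈ X` there is a gradient ray for `c` starting at `x`. -/
theorem gradient_ray_exists [ProperSpace X] (hX : GeodesicSpace X)
    {c : X → X → ℝ} (hc : c ∈ horoboundary X) (x : X) :
    ∃ γ : ℝ → X, γ 0 = x ∧ ∀ s t : ℝ, 0 ≤ s → s ≤ t →
      dist (γ s) (γ t) = t - s ∧ c (γ s) (γ t) = t - s := by
  have hne : (comap busemann (𝓝 c)).NeBot := comap_nhds_neBot_of_mem_closure_range hc.1
  have : Nonempty X := ⟨x⟩
  let U := Ultrafilter.of (comap busemann (𝓝 c))
  have hUc : Tendsto busemann (U : Filter X) (𝓝 c) := tendsto_comap.mono_left (Ultrafilter.of_le _)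
  have hfar (t : ℝ) : ∀ᶠ z in U, t ≤ dist x z :=
    Ultrafilter.of_le _ <| ((tendsto_dist_left_cocompact_atTop x).mono_left
      (comap_nhds_le_cocompact_of_notMem_range continuous_busemann hc.2)).eventually_ge_atTop t
  choose δ hδx hδz hδ using hX x
  let γ (t : ℝ) : X := limUnder U (δ · t)
  have hγ {t : ℝ} (ht : 0 ≤ t) : Tendsto (δ · t) U (𝓝 (γ t)) := by
    refine tendsto_nhds_limUnder ((isCompact_closedBall x t).exists_tendsto_of_eventually_mem ?_)
    filter_upwards [hfar t] with z hz
    rw [mem_closedBall, dist_comm, ← hδx z, (hδ z).dist_eq_sub_s5 le_rfl ht hz, sub_zero]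
  refine ⟨γ, tendsto_nhds_unique (hγ le_rfl) (by simp [hδx]), fun s t hs hst => ⟨?_, ?_⟩⟩
  · refine tendsto_nhds_unique ((hγ hs).dist (hγ (hs.trans hst))) (tendsto_const_nhds.congr' ?_)
    filter_upwards [hfar t] with z hz
    exact ((hδ z).dist_eq_sub_s5 hs hst hz).symm
  · refine tendsto_nhds_unique (hUc.busemann_apply (hγ hs) (hγ (hs.trans hst)))
      (tendsto_const_nhds.congr' ?_)
    filter_upwards [hfar t] with z hz
    have h := (hδ z).busemann_eq_sub hs hst hz
    rw [hδz z] at h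
    exact h.symm
end

section
/- Let X be a proper geodesic metric space with its horocompactification X̄, and define c ∼ c' for c, c' ∈ X̄ if either both lie in ι(X) and are equal, or both lie in ∂X and ‖c − c'‖_∞ < ∞. If F ⊆ X̄ is closed, then the saturation F⁺ (the union of all ∼-equivalence classes meeting F) is a Borel subset of X̄. -/
open Metric Set MeasureTheory

variable {X : Type*} [MetricSpace X]

/-- Two cocycles of the horocompactification are equivalent if they are equal points of
`ι(X)`, or both lie in the horoboundary and differ by a bounded amount. -/
def horoEquiv (X : Type*) [MetricSpace X] (c c' : X → X → ℝ) : Prop :=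
  (c ∈ Set.range (busemann (X := X)) ∧ c = c') ∨
  (c ∈ horoboundary X ∧ c' ∈ horoboundary X ∧ ∃ M : ℝ, ∀ x x' : X, |c x x' - c' x x'| ≤ M)

/-- The saturation of a set: the union of all equivalence classes meeting it. -/
def horoSaturation (X : Type*) [MetricSpace X] (F : Set (X → X → ℝ)) : Set (X → X → ℝ) :=
  {c' | ∃ c ∈ F, horoEquiv X c c'}

/-- The Busemann map is continuous into the product topology. -/
lemma busemann_continuous : Continuous (busemann (X := X)) :=
  continuous_pi fun x => continuous_pi fun y =>
    ((continuous_const.dist continuous_id).sub (continuous_const.dist continuous_id))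

/-- Evaluation at a pair of points is continuous on the product space. -/
lemma eval_continuous (x y : X) : Continuous fun f : X → X → ℝ => f x y :=
  (continuous_apply y).comp (continuous_apply x)

/-- Points of the horocompactification are `1`-Lipschitz in the first variable. -/
lemma horocomp_lip {h : X → X → ℝ} (hh : h ∈ horocompactification X) :
    ∀ x x' y : X, |h x y - h x' y| ≤ dist x x' := by
  have hcl : IsClosed {f : X → X → ℝ | ∀ x x' y : X, |f x y - f x' y| ≤ dist x x'} := by
    have : {f : X → X → ℝ | ∀ x x' y : X, |f x y - f x' y| ≤ dist x x'} =
        ⋂ x, ⋂ x', ⋂ y, (fun f : X → X → ℝ => |f x y - f x' y|) ⁻¹' (Iic (dist x x')) := by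
      ext f; simp [mem_iInter]
    rw [this]
    exact isClosed_iInter fun x => isClosed_iInter fun x' => isClosed_iInter fun y =>
      IsClosed.preimage (((eval_continuous x y).sub (eval_continuous x' y)).abs) isClosed_Iic
  have hsub : Set.range (busemann (X := X)) ⊆
      {f : X → X → ℝ | ∀ x x' y : X, |f x y - f x' y| ≤ dist x x'} := by
    rintro _ ⟨z, rfl⟩ x x' y
    simpa [busemann] using abs_dist_sub_le x x' z
  exact (closure_minimal hsub hcl) hh

/-- Points of the horocompactification are bounded by the distance. -/
lemma horocomp_abs {h : X → X → ℝ} (hh : h ∈ horocompactification X) :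
    ∀ x y : X, |h x y| ≤ dist x y := by
  have hcl : IsClosed {f : X → X → ℝ | ∀ x y : X, |f x y| ≤ dist x y} := by
    have : {f : X → X → ℝ | ∀ x y : X, |f x y| ≤ dist x y} =
        ⋂ x, ⋂ y, (fun f : X → X → ℝ => |f x y|) ⁻¹' (Iic (dist x y)) := by
      ext f; simp [mem_iInter]
    rw [this]
    exact isClosed_iInter fun x => isClosed_iInter fun y =>
      IsClosed.preimage ((eval_continuous x y).abs) isClosed_Iic
  have hsub : Set.range (busemann (X := X)) ⊆ {f : X → X → ℝ | ∀ x y : X, |f x y| ≤ dist x y} := by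
    rintro _ ⟨z, rfl⟩ x y
    simpa [busemann] using abs_dist_sub_le x y z
  exact (closure_minimal hsub hcl) hh

/-- A horofunction goes to `-∞` along suitable points of any ball. -/
lemma exists_small [ProperSpace X] (hX : GeodesicSpace X) {h : X → X → ℝ}
    (hh : h ∈ horoboundary X) (b : X) (t : ℝ) (ht : 0 ≤ t) :
    ∃ m : X, dist b m ≤ t ∧ h m b ≤ -t + 1 := by
  -- h is in the closure of busemann images of far away points
  have hfar : h ∈ closure (busemann (X := X) '' (closedBall b (t + 1))ᶜ) := by
    have h1 : h ∈ closure (Set.range (busemann (X := X))) := hh.1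
    have hsplit : Set.range (busemann (X := X)) =
        busemann (X := X) '' (closedBall b (t + 1)) ∪
        busemann (X := X) '' (closedBall b (t + 1))ᶜ := by
      rw [← image_union, union_compl_self, image_univ]
    rw [hsplit, closure_union] at h1
    rcases h1 with h1 | h1
    · exfalso
      have hcpt : IsCompact (busemann (X := X) '' closedBall b (t + 1)) :=
        (isCompact_closedBall b (t + 1)).image busemann_continuous
      have : h ∈ busemann (X := X) '' closedBall b (t + 1) :=
        hcpt.isClosed.closure_subset h1
      exact hh.2 (image_subset_range _ _ this)
    · exact h1
  -- finite net of the closed ball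
  obtain ⟨N, hNfin, hNcov⟩ :=
    (totallyBounded_iff.mp (isCompact_closedBall b t).totallyBounded) (1/3) (by norm_num)
  -- open neighbourhood of h
  have hUopen : IsOpen (⋂ p ∈ N, {f : X → X → ℝ | dist (f p b) (h p b) < 1/3}) := by
    refine hNfin.isOpen_biInter fun p _ => ?_
    have : {f : X → X → ℝ | dist (f p b) (h p b) < 1/3} =
        (fun f : X → X → ℝ => f p b) ⁻¹' (ball (h p b) (1/3)) := by
      ext f; simp [mem_ball]
    rw [this]
    exact (eval_continuous p b).isOpen_preimage _ isOpen_ball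
  have hUmem : h ∈ ⋂ p ∈ N, {f : X → X → ℝ | dist (f p b) (h p b) < 1/3} := by
    simp
  obtain ⟨g, hgU, hgim⟩ := (_root_.mem_closure_iff.mp hfar) _ hUopen hUmem
  obtain ⟨z, hz, rfl⟩ := hgim
  have hbz : t + 1 ≤ dist b z := by
    rw [mem_compl_iff, mem_closedBall, not_le, dist_comm] at hz
    linarith
  obtain ⟨γ, hγ0, hγ1, hγgeo⟩ := hX b z
  have htmem : t ∈ Icc (0:ℝ) (dist b z) := ⟨ht, by linarith⟩
  have h0mem : (0:ℝ) ∈ Icc (0:ℝ) (dist b z) := ⟨le_refl _, dist_nonneg⟩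
  have hdmem : dist b z ∈ Icc (0:ℝ) (dist b z) := ⟨dist_nonneg, le_refl _⟩
  set m := γ t with hm
  have hdbm : dist b m = t := by
    have := hγgeo 0 h0mem t htmem
    rw [hγ0] at this
    rw [this]
    rw [abs_of_nonpos (by linarith)]; ring
  have hdmz : dist m z = dist b z - t := by
    have := hγgeo t htmem (dist b z) hdmem
    rw [hγ1] at this
    rw [this, abs_of_nonpos (by linarith)]; ring
  have hgm : busemann z m b = -t := by
    simp only [busemann, hdmz]; ring
  have hmball : m ∈ closedBall b t := by rw [mem_closedBall, dist_comm]; exact le_of_eq hdbm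
  obtain ⟨p, hpN, hpm⟩ := by
    have := hNcov hmball
    simpa only [mem_iUnion, exists_prop] using this
  rw [mem_ball] at hpm
  have hA := horocomp_lip hh.1 m p b
  have hC := horocomp_lip (subset_closure (mem_range_self z)) m p b
  have hB : dist (busemann z p b) (h p b) < 1/3 := mem_iInter₂.mp hgU p hpN
  rw [Real.dist_eq] at hB
  refine ⟨m, le_of_eq hdbm, ?_⟩
  have hA' := abs_le.mp hA
  have hC' := abs_le.mp hC
  have hB' := abs_lt.mp hB
  rw [hgm] at hC'
  linarith [hA'.2, hC'.1, hB'.1]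

/-- No Busemann cocycle is at bounded distance from a horoboundary point. -/
lemma not_busemann [ProperSpace X] (hX : GeodesicSpace X) {c c' : X → X → ℝ}
    (hc' : c' ∈ horoboundary X) (M : ℝ) (hM : ∀ x x' : X, |c x x' - c' x x'| ≤ M) :
    c ∉ Set.range (busemann (X := X)) := by
  rintro ⟨z, rfl⟩
  have hM0 : 0 ≤ M := le_trans (abs_nonneg _) (hM z z)
  obtain ⟨m, _, hm2⟩ := exists_small hX hc' z (M + 2) (by linarith)
  have h1 := hM m z
  have h2 : busemann z m z = dist m z := by simp [busemann]
  have h3 : (0:ℝ) ≤ dist m z := dist_nonneg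
  have := abs_le.mp h1
  rw [h2] at this
  linarith [this.2]

/-- The `M`-thickening (in the sup metric) of a closed subset of the compact
horocompactification is closed. -/
lemma slab_closed [ProperSpace X] (F : Set (X → X → ℝ)) (hFcl : IsClosed F)
    (hFX : F ⊆ horocompactification X) (M : ℝ) :
    IsClosed {c' : X → X → ℝ | ∃ c ∈ F, ∀ x x' : X, |c x x' - c' x x'| ≤ M} := by
  -- F is compact
  have hSc : IsCompact (Set.pi (univ : Set X) fun x => Set.pi (univ : Set X) fun y =>
      Icc (-(dist x y)) (dist x y)) :=
    isCompact_univ_pi fun x => isCompact_univ_pi fun y => isCompact_Icc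
  have hFS : F ⊆ Set.pi (univ : Set X) fun x => Set.pi (univ : Set X) fun y =>
      Icc (-(dist x y)) (dist x y) := by
    intro c hc x _ y _
    exact abs_le.mp (horocomp_abs (hFX hc) x y)
  have hFcpt : IsCompact F := hSc.of_isClosed_subset hFcl hFS
  -- the big box
  set S2 : Set (X → X → ℝ) := Set.pi (univ : Set X) fun x => Set.pi (univ : Set X) fun y =>
      Icc (-(dist x y + M)) (dist x y + M) with hS2
  have hS2c : IsCompact S2 := isCompact_univ_pi fun x => isCompact_univ_pi fun y => isCompact_Icc
  -- the closed relation
  set D : Set ((X → X → ℝ) × (X → X → ℝ)) := {p | ∀ x x' : X, |p.1 x x' - p.2 x x'| ≤ M} with hD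
  have hDcl : IsClosed D := by
    have : D = ⋂ x, ⋂ x', (fun p : (X → X → ℝ) × (X → X → ℝ) =>
        |p.1 x x' - p.2 x x'|) ⁻¹' Iic M := by
      ext p; simp [hD, mem_iInter]
    rw [this]
    exact isClosed_iInter fun x => isClosed_iInter fun x' =>
      IsClosed.preimage ((((eval_continuous x x').comp continuous_fst).sub
        ((eval_continuous x x').comp continuous_snd)).abs) isClosed_Iic
  have hKcpt : IsCompact ((F ×ˢ S2) ∩ D) := (hFcpt.prod hS2c).inter_right hDcl
  have himg : {c' : X → X → ℝ | ∃ c ∈ F, ∀ x x' : X, |c x x' - c' x x'| ≤ M} =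
      Prod.snd '' ((F ×ˢ S2) ∩ D) := by
    ext c'
    constructor
    · rintro ⟨c, hcF, hb⟩
      refine ⟨(c, c'), ⟨⟨hcF, ?_⟩, hb⟩, rfl⟩
      intro x _ y _
      have h1 := abs_le.mp (horocomp_abs (hFX hcF) x y)
      have h2 := abs_le.mp (hb x y)
      constructor <;> simp only [] <;> linarith [h1.1, h1.2, h2.1, h2.2]
    · rintro ⟨⟨c, c''⟩, ⟨⟨hcF, -⟩, hb⟩, rfl⟩
      exact ⟨c, hcF, hb⟩
  rw [himg]
  exact ((hKcpt.image continuous_snd).isClosed)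

/-- The saturation of a closed subset of the horocompactification is Borel. -/
theorem saturation_closed_is_borel [ProperSpace X] (hX : GeodesicSpace X)
    (F : Set (X → X → ℝ)) (hFcl : IsClosed F) (hFX : F ⊆ horocompactification X) :
    MeasurableSet[borel (X → X → ℝ)] (horoSaturation X F) := by
  letI : MeasurableSpace (X → X → ℝ) := borel (X → X → ℝ)
  haveI : BorelSpace (X → X → ℝ) := ⟨rfl⟩
  rcases isEmpty_or_nonempty X with hE | hNE
  · have hempty : horoSaturation X F = ∅ := by
      ext c'
      simp only [horoSaturation, mem_setOf_eq, mem_empty_iff_false, iff_false, not_exists]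
      rintro c ⟨hcF, -⟩
      have hc := hFX hcF
      rw [horocompactification, Set.range_eq_empty, closure_empty] at hc
      exact hc
    rw [hempty]
    exact MeasurableSet.empty
  · obtain ⟨b⟩ := hNE
    -- the image of X is a countable union of compacts, hence measurable
    have hrange : MeasurableSet (Set.range (busemann (X := X))) := by
      have hcover : Set.range (busemann (X := X)) =
          ⋃ n : ℕ, busemann (X := X) '' closedBall b n := by
        ext f
        constructor
        · rintro ⟨z, rfl⟩
          obtain ⟨n, hn⟩ := exists_nat_ge (dist z b)
          exact mem_iUnion.mpr ⟨n, z, by rwa [mem_closedBall], rfl⟩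
        · intro hf
          obtain ⟨n, z, -, rfl⟩ := by simpa only [mem_iUnion, mem_image] using hf
          exact mem_range_self z
      rw [hcover]
      exact MeasurableSet.iUnion fun n =>
        (((isCompact_closedBall b n).image busemann_continuous).isClosed).measurableSet
    have hbd : MeasurableSet (horoboundary X) :=
      (isClosed_closure.measurableSet).diff hrange
    -- decomposition of the saturation
    have hdecomp : horoSaturation X F =
        (F ∩ Set.range (busemann (X := X))) ∪
        (horoboundary X ∩
          ⋃ n : ℕ, {c' : X → X → ℝ | ∃ c ∈ F, ∀ x x' : X, |c x x' - c' x x'| ≤ (n : ℝ)}) := by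
      ext c'
      constructor
      · rintro ⟨c, hcF, hequiv⟩
        rcases hequiv with ⟨hcr, rfl⟩ | ⟨hc, hc', M, hM⟩
        · exact Or.inl ⟨hcF, hcr⟩
        · obtain ⟨n, hn⟩ := exists_nat_ge M
          exact Or.inr ⟨hc', mem_iUnion.mpr ⟨n, c, hcF, fun x x' => (hM x x').trans hn⟩⟩
      · rintro (⟨h1, h2⟩ | ⟨h1, h2⟩)
        · exact ⟨c', h1, Or.inl ⟨h2, rfl⟩⟩
        · obtain ⟨n, hn⟩ := mem_iUnion.mp h2
          obtain ⟨c, hcF, hc⟩ := hn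
          exact ⟨c, hcF, Or.inr ⟨⟨hFX hcF, not_busemann hX h1 (n : ℝ) hc⟩, h1, (n : ℝ), hc⟩⟩
    rw [hdecomp]
    refine (hFcl.measurableSet.inter hrange).union
      (hbd.inter (MeasurableSet.iUnion fun n => ?_))
    exact (slab_closed F hFcl hFX (n : ℝ)).measurableSet
end

section
/- Let Y be a closed subset of a proper geodesic metric space X, c a cocycle in the horocompactification X̄ admitting a projection q on Y (i.e. c(q, y) ≤ 0 for all y ∈ Y), and γ a gradient arc for c starting at q. Then for every t in the domain of γ, the point q is a nearest-point projection of γ(t) on Y. -/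
open Metric Set MeasureTheory

variable {X : Type*} [MetricSpace X]

/-! Along a gradient arc from `q` one has `c q (γ t) = t = dist q (γ t)`. For `y ∈ Y`, the cocycle
identity and `c q y ≤ 0` give `c q x ≤ c y x ≤ dist y x`, so `c q x` bounds the distance from any
`x` to `Y` from below. -/

section Horocompactification

variable {c : X → X → ℝ}

theorem cocycle_of_mem_horocompactification (hc : c ∈ horocompactification X) (x y z : X) :
    c x z = c x y + c y z := by
  refine closure_minimal (t := {f : X → X → ℝ | f x z = f x y + f y z}) ?_
    (isClosed_eq (by fun_prop) (by fun_prop)) hc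
  rintro _ ⟨w, rfl⟩
  simp only [busemann, mem_ofPred_eq]
  ring

theorem le_dist_of_mem_horocompactification (hc : c ∈ horocompactification X) (x y : X) :
    c x y ≤ dist x y := by
  refine closure_minimal (t := {f : X → X → ℝ | f x y ≤ dist x y}) ?_
    (isClosed_le (by fun_prop) continuous_const) hc
  rintro _ ⟨w, rfl⟩
  simp only [busemann, mem_ofPred_eq]
  linarith [dist_triangle x y w]

theorem le_infDist_of_projection (hc : c ∈ horocompactification X) {Y : Set X} {q : X}
    (hq : q ∈ Y) (hproj : ∀ y ∈ Y, c q y ≤ 0) (x : X) : c q x ≤ infDist x Y := by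
  refine (le_infDist ⟨q, hq⟩).2 fun y hy => ?_
  calc c q x = c q y + c y x := cocycle_of_mem_horocompactification hc q y x
    _ ≤ dist y x :=
      add_le_of_nonpos_of_le (hproj y hy) (le_dist_of_mem_horocompactification hc y x)
    _ = dist x y := dist_comm y x

end Horocompactification

theorem proj_gradient_arc_general
    {Y : Set X} {c : X → X → ℝ} (hc : c ∈ horocompactification X)
    {q : X} (hq : q ∈ Y) (hproj : ∀ y ∈ Y, c q y ≤ 0)
    (γ : ℝ → X) (I : Set ℝ) (hI0 : (0 : ℝ) ∈ I) (hInn : ∀ t ∈ I, 0 ≤ t)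
    (hstart : γ 0 = q)
    (hgrad : ∀ s ∈ I, ∀ t ∈ I, s ≤ t →
      dist (γ s) (γ t) = t - s ∧ c (γ s) (γ t) = t - s) :
    ∀ t ∈ I, dist (γ t) q = Metric.infDist (γ t) Y := by
  intro t ht
  obtain ⟨hdist, hcoc⟩ := hgrad 0 hI0 t ht (hInn t ht)
  rw [hstart, sub_zero] at hdist hcoc
  refine le_antisymm ?_ (infDist_le_dist_of_mem hq)
  calc dist (γ t) q = c q (γ t) := by rw [dist_comm, hdist, hcoc]
    _ ≤ infDist (γ t) Y := le_infDist_of_projection hc hq hproj (γ t)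

/-- If `q` is a projection of the cocycle `c` on the closed set `Y` and `γ` is a gradient
arc for `c` starting at `q`, then `q` is a nearest-point projection of each `γ t` on `Y`. -/
theorem proj_gradient_arc [ProperSpace X] (hX : GeodesicSpace X)
    {Y : Set X} (hY : IsClosed Y) {c : X → X → ℝ} (hc : c ∈ horocompactification X)
    {q : X} (hq : q ∈ Y) (hproj : ∀ y ∈ Y, c q y ≤ 0)
    (γ : ℝ → X) (I : Set ℝ) (hI0 : (0 : ℝ) ∈ I) (hInn : ∀ t ∈ I, 0 ≤ t)
    (hstart : γ 0 = q)
    (hgrad : ∀ s ∈ I, ∀ t ∈ I, s ≤ t →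
      dist (γ s) (γ t) = t - s ∧ c (γ s) (γ t) = t - s) :
    ∀ t ∈ I, dist (γ t) q = Metric.infDist (γ t) Y :=
  proj_gradient_arc_general hc hq hproj γ I hI0 hInn hstart hgrad
end

section
/- Let G act properly by isometries on a proper geodesic metric space X, and let ν = (ν_x)_{x∈X} be a density on the horocompactification which is almost-fixed by G: there is C > 0 with (1/C) ν_x ≤ ν_x^g ≤ C ν_x for all g ∈ G and x ∈ X, where ν_x^g = (1/‖ν_{go}‖) (g⁻¹)_* ν_{gx}. Then the map χ : G → ℝ, χ(g) = ln ‖ν_{go}‖, is a quasi-morphism: |χ(g) + χ(g') − χ(gg')| ≤ ln C for all g, g' ∈ G. -/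
open Metric Set MeasureTheory

variable {X : Type*} [MetricSpace X]

/-- The action of `g ∈ G` on cocycles: `(g • c)(x, y) = c(g⁻¹x, g⁻¹y)`. -/
def translCocycle {G : Type*} [Group G] [MulAction G X] (g : G) (c : X → X → ℝ) :
    X → X → ℝ := fun x y => c (g⁻¹ • x) (g⁻¹ • y)

/-- The density `ν^g`: `ν^g_x = (1/‖ν_{go}‖) (g⁻¹)_* ν_{gx}`. -/
noncomputable def densityRightAction {G : Type*} [Group G] [MulAction G X]
    (o : X) (ν : X → Measure (X → X → ℝ)) (g : G) (x : X) : Measure (X → X → ℝ) :=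
  (ν (g • o) Set.univ)⁻¹ • Measure.map (translCocycle (X := X) g⁻¹) (ν (g • x))

/-- If a density is almost-fixed by `G` with constant `C`, then `g ↦ ln ‖ν_{go}‖` is a
quasi-morphism with defect at most `ln C`. -/
theorem almost_fixed_gives_quasimorphism {G : Type*} [Group G]
    [ProperSpace X] [MulAction G X]
    (hX : GeodesicSpace X) (hiso : ∀ g : G, Isometry fun x : X => g • x) (o : X)
    (hproper : ∀ r : ℝ, {g : G | dist o (g • o) ≤ r}.Finite)
    (ν : X → Measure (X → X → ℝ))
    (hfin : ∀ x : X, ν x Set.univ < ⊤) (hpos : ∀ x : X, 0 < ν x Set.univ)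
    (hnorm : ν o Set.univ = 1)
    (hac : ∀ x y : X, ν x ≪ ν y)
    (C : ℝ) (hC : 0 < C)
    (halmost : ∀ (g : G) (x : X) (A : Set (X → X → ℝ)), MeasurableSet A →
      ν x A ≤ ENNReal.ofReal C * densityRightAction o ν g x A ∧
      densityRightAction o ν g x A ≤ ENNReal.ofReal C * ν x A) :
    ∀ g g' : G,
      |Real.log ((ν (g • o) Set.univ).toReal) + Real.log ((ν (g' • o) Set.univ).toReal)
        - Real.log ((ν ((g * g') • o) Set.univ).toReal)| ≤ Real.log C := by
  intro g g'
  have hmeas : Measurable (translCocycle (X := X) (G := G) g⁻¹) := by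
    apply measurable_pi_lambda
    intro x
    apply measurable_pi_lambda
    intro y
    exact (measurable_pi_apply _).comp (measurable_pi_apply _)
  have hd : densityRightAction o ν g (g' • o) Set.univ
      = (ν (g • o) Set.univ)⁻¹ * ν ((g * g') • o) Set.univ := by
    simp [densityRightAction, Measure.map_apply hmeas MeasurableSet.univ, mul_smul]
  obtain ⟨h1, h2⟩ := halmost g (g' • o) Set.univ MeasurableSet.univ
  rw [hd] at h1 h2
  set A := ν (g • o) Set.univ with hA
  set B := ν (g' • o) Set.univ with hB
  set D := ν ((g * g') • o) Set.univ with hD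
  have hA0 : A ≠ 0 := (hpos _).ne'
  have hAt : A ≠ ⊤ := (hfin _).ne
  have hB0 : B ≠ 0 := (hpos _).ne'
  have hBt : B ≠ ⊤ := (hfin _).ne
  have hD0 : D ≠ 0 := (hpos _).ne'
  have hDt : D ≠ ⊤ := (hfin _).ne
  have hADt : A⁻¹ * D ≠ ⊤ := ENNReal.mul_ne_top (ENNReal.inv_ne_top.2 hA0) hDt
  set a := A.toReal with ha
  set b := B.toReal with hb
  set d := D.toReal with hdd
  have ha0 : 0 < a := ENNReal.toReal_pos hA0 hAt
  have hb0 : 0 < b := ENNReal.toReal_pos hB0 hBt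
  have hd0 : 0 < d := ENNReal.toReal_pos hD0 hDt
  have hADr : (A⁻¹ * D).toReal = a⁻¹ * d := by
    rw [ENNReal.toReal_mul, ENNReal.toReal_inv]
  -- real versions of the inequalities
  have r1 : b ≤ C * (a⁻¹ * d) := by
    have := ENNReal.toReal_le_toReal hBt
      (ENNReal.mul_ne_top ENNReal.ofReal_ne_top hADt) |>.2 h1
    simpa only [ENNReal.toReal_mul, ENNReal.toReal_ofReal hC.le,
      ENNReal.toReal_inv] using this
  have r2 : a⁻¹ * d ≤ C * b := by
    have := ENNReal.toReal_le_toReal hADt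
      (ENNReal.mul_ne_top ENNReal.ofReal_ne_top hBt) |>.2 h2
    simpa only [ENNReal.toReal_mul, ENNReal.toReal_ofReal hC.le,
      ENNReal.toReal_inv] using this
  have had0 : 0 < a⁻¹ * d := by positivity
  have lC : Real.log (C * (a⁻¹ * d)) = Real.log C + (Real.log d - Real.log a) := by
    rw [Real.log_mul hC.ne' had0.ne', Real.log_mul (inv_ne_zero ha0.ne') hd0.ne',
      Real.log_inv]
    ring
  have lC' : Real.log (C * b) = Real.log C + Real.log b := by
    rw [Real.log_mul hC.ne' hb0.ne']
  rw [abs_le]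
  constructor
  · -- from r2 : log (a⁻¹ * d) ≤ log C + log b
    have := Real.log_le_log had0 r2
    rw [lC', Real.log_mul (inv_ne_zero ha0.ne') hd0.ne', Real.log_inv] at this
    linarith
  · -- from r1 : log b ≤ log C + log d - log a
    have := Real.log_le_log hb0 r1
    rw [lC] at this
    linarith
end

section
/- Let G act properly by isometries on a proper geodesic metric space X with base point o, and let ν = (ν_x) be an ω-conformal density on X̄. Then for every g ∈ G and r ≥ 0, the shadow O_o(go, r) satisfies ν_o(O_o(go, r)) ≤ e^{2ωr} ‖ν_{go}‖ e^{−ω d(o, go)}. -/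
/-! On the shadow `O_o(go, r)` the antisymmetry of cocycles turns the Gromov-product bound
into `c(o, go) ≥ d(o, go) - 2r`, so the Radon–Nikodym density `e^{-ω c(o, go)}` of `ν_o`
with respect to `ν_{go}` is at most `e^{2ωr - ω d(o, go)}` there. -/

open Metric Set MeasureTheory

variable {X : Type*} [MetricSpace X]

/-- The Gromov product of `x ∈ X` and a cocycle `c` based at `y`. -/
noncomputable def gromovProduct (x : X) (c : X → X → ℝ) (y : X) : ℝ := (dist x y + c y x) / 2

/-- The `r`-shadow of `y` seen from `x`. -/
def shadow (x y : X) (r : ℝ) : Set (X → X → ℝ) :=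
  {c | c ∈ horocompactification X ∧ gromovProduct x c y ≤ r}

lemma horocompactification.apply_swap {c : X → X → ℝ} (hc : c ∈ horocompactification X)
    (x y : X) : c y x = -c x y := by
  have hclosed : IsClosed {f : X → X → ℝ | f y x = -f x y} :=
    isClosed_eq (by fun_prop) (by fun_prop)
  refine closure_minimal ?_ hclosed hc
  rintro _ ⟨z, rfl⟩
  exact (neg_sub _ _).symm

lemma shadow_subset_setOf_le (x y : X) (r : ℝ) :
    shadow x y r ⊆ {c | dist x y - 2 * r ≤ c x y} := by
  rintro c ⟨hc, hprod⟩
  have hswap := horocompactification.apply_swap hc x y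
  simp only [gromovProduct] at hprod
  show dist x y - 2 * r ≤ c x y
  linarith

lemma measure_setOf_le_apply_le_of_conformal {α : Type*} {ω : ℝ} (hω : 0 ≤ ω)
    {ν : α → Measure (α → α → ℝ)} {x y : α}
    (hconf : ∀ A : Set (α → α → ℝ), MeasurableSet A →
      ν x A = ∫⁻ c in A, ENNReal.ofReal (Real.exp (-ω * c x y)) ∂(ν y)) (t : ℝ) :
    ν x {c | t ≤ c x y} ≤ ENNReal.ofReal (Real.exp (-ω * t)) * ν y univ := by
  have hmeas : MeasurableSet {c : α → α → ℝ | t ≤ c x y} :=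
    measurableSet_le measurable_const (by fun_prop)
  calc ν x {c | t ≤ c x y}
      = ∫⁻ c in {c | t ≤ c x y}, ENNReal.ofReal (Real.exp (-ω * c x y)) ∂(ν y) :=
        hconf _ hmeas
    _ ≤ ∫⁻ _ in {c | t ≤ c x y}, ENNReal.ofReal (Real.exp (-ω * t)) ∂(ν y) :=
        setLIntegral_mono measurable_const fun c (hc : t ≤ c x y) =>
          ENNReal.ofReal_le_ofReal <| Real.exp_le_exp.mpr <|
            mul_le_mul_of_nonpos_left hc (neg_nonpos.mpr hω)
    _ = ENNReal.ofReal (Real.exp (-ω * t)) * ν y {c | t ≤ c x y} := setLIntegral_const _ _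
    _ ≤ ENNReal.ofReal (Real.exp (-ω * t)) * ν y univ := by gcongr; exact subset_univ _

theorem shadow_measure_upper_bound_general {G : Type*} [Group G]
    [MulAction G X] (o : X)
    (ω : ℝ) (hω : 0 ≤ ω) (ν : X → Measure (X → X → ℝ))
    (hconf : ∀ x y : X, ∀ A : Set (X → X → ℝ), MeasurableSet A →
      ν x A = ∫⁻ c in A, ENNReal.ofReal (Real.exp (-ω * c x y)) ∂(ν y))
    (g : G) (r : ℝ) :
    ν o (shadow o (g • o) r) ≤
      ENNReal.ofReal (Real.exp (2 * ω * r)) * ν (g • o) Set.univ *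
        ENNReal.ofReal (Real.exp (-ω * dist o (g • o))) := by
  calc ν o (shadow o (g • o) r)
      ≤ ν o {c | dist o (g • o) - 2 * r ≤ c o (g • o)} :=
        measure_mono (shadow_subset_setOf_le o (g • o) r)
    _ ≤ ENNReal.ofReal (Real.exp (-ω * (dist o (g • o) - 2 * r))) * ν (g • o) univ :=
        measure_setOf_le_apply_le_of_conformal hω (hconf o (g • o)) _
    _ = ENNReal.ofReal (Real.exp (2 * ω * r)) * ν (g • o) univ *
          ENNReal.ofReal (Real.exp (-ω * dist o (g • o))) := by
        rw [show -ω * (dist o (g • o) - 2 * r) = 2 * ω * r + -ω * dist o (g • o) by ring,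
          Real.exp_add, ENNReal.ofReal_mul (Real.exp_nonneg _)]
        ring

/-- Upper bound in the Shadow Lemma: for any `ω`-conformal density,
`ν_o(O_o(go, r)) ≤ e^{2ωr} ‖ν_{go}‖ e^{-ω d(o,go)}`. -/
theorem shadow_measure_upper_bound {G : Type*} [Group G]
    [ProperSpace X] [MulAction G X]
    (hX : GeodesicSpace X) (hiso : ∀ g : G, Isometry fun x : X => g • x) (o : X)
    (hproper : ∀ r : ℝ, {g : G | dist o (g • o) ≤ r}.Finite)
    (ω : ℝ) (hω : 0 ≤ ω) (ν : X → Measure (X → X → ℝ))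
    (hfin : ∀ x : X, ν x Set.univ < ⊤)
    (hsupp : ∀ x : X, ν x (horocompactification X)ᶜ = 0)
    (hconf : ∀ x y : X, ∀ A : Set (X → X → ℝ), MeasurableSet A →
      ν x A = ∫⁻ c in A, ENNReal.ofReal (Real.exp (-ω * c x y)) ∂(ν y))
    (g : G) (r : ℝ) (hr : 0 ≤ r) :
    ν o (shadow o (g • o) r) ≤
      ENNReal.ofReal (Real.exp (2 * ω * r)) * ν (g • o) Set.univ *
        ENNReal.ofReal (Real.exp (-ω * dist o (g • o))) :=
  shadow_measure_upper_bound_general o ω hω ν hconf g r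
end

section
/- (Kochen–Stone) Let (Ω, μ) be a probability space and (B_n) a sequence of measurable subsets with Σ_n μ(B_n) = ∞. Suppose there is C > 0 such that for every N, Σ_{n₁=0}^{N} Σ_{n₂=0}^{N} μ(B_{n₁} ∩ B_{n₂}) ≤ C (Σ_{n=0}^{N} μ(B_n))². Then μ(limsup_n B_n) ≥ 1/C. -/
/-!
Put `f = ∑_{n ∈ s} 1_{B n}`. Cauchy–Schwarz on the support of `f` gives the Chung–Erdős
inequality `(∑ μ(B n))² ≤ (∑∑ μ(B i ∩ B j)) · μ(⋃ B n)`. For the block `N ≤ n ≤ M` the double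
sum is at most that over `n ≤ M`, so with `T_M = ∑_{n ≤ M} μ(B n)` the hypothesis yields
`(T_M - T_{N-1})² ≤ C T_M² μ(⋃_{n ≥ N} B n)`. As `T_M → ∞` this forces `μ(⋃_{n ≥ N} B n) ≥ 1 / C`
for every `N`, and these tails decrease to the limsup.
-/

open MeasureTheory Filter Finset ENNReal

theorem ENNReal.tendsto_sum_range_toReal_atTop {f : ℕ → ℝ≥0∞} (hf : ∀ n, f n ≠ ∞)
    (hsum : ∑' n, f n = ∞) :
    Tendsto (fun M => ∑ n ∈ range M, (f n).toReal) atTop atTop := by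
  lift f to ℕ → NNReal using hf
  simpa [← not_summable_iff_tendsto_nat_atTop_of_nonneg] using
    tsum_coe_eq_top_iff_not_summable_coe.1 hsum

theorem one_le_of_eventually_sq_sub_le_mul_sq {t : ℕ → ℝ} (ht : Tendsto t atTop atTop)
    (p K : ℝ) (h : ∀ᶠ M in atTop, (t M - p) ^ 2 ≤ K * t M ^ 2) : 1 ≤ K := by
  have hlim : Tendsto (fun M => (1 - p / t M) ^ 2) atTop (nhds 1) := by
    simpa using ((tendsto_const_nhds (x := (1 : ℝ))).sub
      (tendsto_const_nhds.div_atTop ht)).pow 2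
  refine le_of_tendsto hlim ?_
  filter_upwards [h, ht.eventually_gt_atTop 0] with M hM hpos
  rw [one_sub_div hpos.ne', div_pow, div_le_iff₀ (by positivity)]
  exact hM

section
variable {α : Type*} [MeasurableSpace α] {μ : Measure α}

theorem sq_lintegral_le_lintegral_sq_mul_measure {f : α → ℝ≥0∞} (hf : AEMeasurable f μ)
    {U : Set α} (hU : MeasurableSet U) (hfU : ∀ x ∉ U, f x = 0) :
    (∫⁻ x, f x ∂μ) ^ 2 ≤ (∫⁻ x, f x ^ 2 ∂μ) * μ U := by
  have hsq : ∀ a : ℝ≥0∞, (a ^ (1 / 2 : ℝ)) ^ 2 = a := fun a => by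
    rw [← ENNReal.rpow_natCast, ← ENNReal.rpow_mul]; norm_num
  have hf_eq : f = f * U.indicator (1 : α → ℝ≥0∞) := by
    ext x; by_cases hx : x ∈ U <;> simp [hx, hfU]
  have h_ind : ∫⁻ x, U.indicator (1 : α → ℝ≥0∞) x ^ 2 ∂μ = μ U := by
    rw [← lintegral_indicator_one hU]
    congr with x
    by_cases hx : x ∈ U <;> simp [hx]
  have holder := ENNReal.lintegral_mul_le_Lp_mul_Lq μ Real.HolderConjugate.two_two hf
    (aemeasurable_one.indicator hU)
  simp only [ENNReal.rpow_two] at holder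
  calc (∫⁻ x, f x ∂μ) ^ 2 = (∫⁻ x, (f * U.indicator (1 : α → ℝ≥0∞)) x ∂μ) ^ 2 := by rw [← hf_eq]
    _ ≤ ((∫⁻ x, f x ^ 2 ∂μ) ^ (1 / 2 : ℝ) *
        (∫⁻ x, U.indicator (1 : α → ℝ≥0∞) x ^ 2 ∂μ) ^ (1 / 2 : ℝ)) ^ 2 := by gcongr; exact holder
    _ = (∫⁻ x, f x ^ 2 ∂μ) * μ U := by rw [mul_pow, hsq, hsq, h_ind]

theorem lintegral_sum_indicator_one {ι : Type*} {B : ι → Set α} (hB : ∀ i, MeasurableSet (B i))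
    (s : Finset ι) : ∫⁻ x, ∑ i ∈ s, (B i).indicator 1 x ∂μ = ∑ i ∈ s, μ (B i) := by
  rw [lintegral_finsetSum _ fun i _ => measurable_one.indicator (hB i)]
  simp [lintegral_indicator_one (hB _)]

theorem sq_sum_measure_le_sum_measure_inter_mul_measure_biUnion {ι : Type*} {B : ι → Set α}
    (hB : ∀ i, MeasurableSet (B i)) (s : Finset ι) :
    (∑ i ∈ s, μ (B i)) ^ 2 ≤ (∑ i ∈ s, ∑ j ∈ s, μ (B i ∩ B j)) * μ (⋃ i ∈ s, B i) := by
  set f : α → ℝ≥0∞ := fun x => ∑ i ∈ s, (B i).indicator 1 x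
  have h_int : ∫⁻ x, f x ∂μ = ∑ i ∈ s, μ (B i) := lintegral_sum_indicator_one hB s
  have h_int_sq : ∫⁻ x, f x ^ 2 ∂μ = ∑ i ∈ s, ∑ j ∈ s, μ (B i ∩ B j) := by
    have h_sq : ∀ x, f x ^ 2 = ∑ p ∈ s ×ˢ s, (B p.1 ∩ B p.2).indicator 1 x := fun x => by
      simp [f, sq, sum_mul_sum, sum_product, Set.inter_indicator_one]
    simp_rw [h_sq, lintegral_sum_indicator_one fun p : ι × ι => (hB p.1).inter (hB p.2),
      sum_product]
  have h_supp : ∀ x ∉ ⋃ i ∈ s, B i, f x = 0 := fun x hx =>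
    sum_eq_zero fun i hi => Set.indicator_of_notMem (fun hxi => hx (Set.mem_biUnion hi hxi)) _
  rw [← h_int, ← h_int_sq]
  exact sq_lintegral_le_lintegral_sq_mul_measure
    (Finset.measurable_sum _ fun i _ => measurable_one.indicator (hB i)).aemeasurable
    (s.measurableSet_biUnion fun i _ => hB i) h_supp

theorem sq_sum_Ico_measure_le_mul_measure_iUnion_ge {B : ℕ → Set α}
    (hB : ∀ n, MeasurableSet (B n)) (N M : ℕ) :
    (∑ n ∈ Ico N M, μ (B n)) ^ 2 ≤
      (∑ i ∈ range M, ∑ j ∈ range M, μ (B i ∩ B j)) * μ (⋃ n, ⋃ _ : N ≤ n, B n) := by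
  refine (sq_sum_measure_le_sum_measure_inter_mul_measure_biUnion hB _).trans ?_
  have h_sub : (Ico N M : Finset ℕ) ⊆ range M := fun n hn => mem_range.2 (mem_Ico.1 hn).2
  refine mul_le_mul' ?_ (measure_mono ?_)
  · exact (sum_le_sum fun i _ => sum_le_sum_of_subset h_sub).trans (sum_le_sum_of_subset h_sub)
  · exact Set.iUnion₂_mono' fun n hn => ⟨n, (mem_Ico.1 hn).1, subset_rfl⟩

end

theorem ofReal_one_div_le_measure_iUnion_ge {Ω : Type*} [MeasurableSpace Ω] {μ : Measure Ω}
    [IsFiniteMeasure μ] {B : ℕ → Set Ω} (hB : ∀ n, MeasurableSet (B n))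
    (hdiv : ∑' n, μ (B n) = ∞) {C : ℝ} (hC : 0 < C)
    (hbound : ∀ M : ℕ, ∑ i ∈ range (M + 1), ∑ j ∈ range (M + 1), μ (B i ∩ B j) ≤
      ENNReal.ofReal C * (∑ n ∈ range (M + 1), μ (B n)) ^ 2) (N : ℕ) :
    ENNReal.ofReal (1 / C) ≤ μ (⋃ n, ⋃ _ : N ≤ n, B n) := by
  set U := ⋃ n, ⋃ _ : N ≤ n, B n
  set t : ℕ → ℝ := fun M => ∑ n ∈ range (M + 1), μ.real (B n)
  set p : ℝ := ∑ n ∈ range N, μ.real (B n)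
  have ht : Tendsto t atTop atTop :=
    (ENNReal.tendsto_sum_range_toReal_atTop (fun n => measure_ne_top μ (B n)) hdiv).comp
      (tendsto_add_atTop_nat 1)
  have h_tail : ∀ M, N ≤ M → (t M - p) ^ 2 ≤ (C * μ.real U) * t M ^ 2 := by
    intro M hNM
    have h := (sq_sum_Ico_measure_le_mul_measure_iUnion_ge hB N (M + 1)).trans
      (mul_le_mul_left (hbound M) _)
    have h_split : t M - p = ∑ n ∈ Ico N (M + 1), μ.real (B n) :=
      sub_eq_of_eq_add' (sum_range_add_sum_Ico _ (by omega)).symm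
    have h_real := ENNReal.toReal_mono (by simp [mul_eq_top, sum_eq_top, measure_ne_top]) h
    simp only [toReal_pow, toReal_mul, toReal_ofReal hC.le,
      ENNReal.toReal_sum fun n _ => measure_ne_top μ _, ← measureReal_def] at h_real
    rw [h_split]
    linarith
  have h_one : 1 ≤ C * μ.real U :=
    one_le_of_eventually_sq_sub_le_mul_sq ht p _ (eventually_atTop.2 ⟨N, h_tail⟩)
  rwa [ENNReal.ofReal_le_iff_le_toReal (measure_ne_top μ U), div_le_iff₀' hC]

/-- Kochen–Stone theorem: a quantitative second Borel–Cantelli lemma. -/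
theorem kochen_stone {Ω : Type*} [MeasurableSpace Ω] (μ : Measure Ω)
    [IsProbabilityMeasure μ] (B : ℕ → Set Ω) (hmeas : ∀ n, MeasurableSet (B n))
    (hdiv : ∑' n : ℕ, μ (B n) = ⊤)
    (C : ℝ) (hC : 0 < C)
    (hbound : ∀ N : ℕ,
      ∑ n₁ ∈ Finset.range (N + 1), ∑ n₂ ∈ Finset.range (N + 1), μ (B n₁ ∩ B n₂) ≤
        ENNReal.ofReal C * (∑ n ∈ Finset.range (N + 1), μ (B n)) ^ 2) :
    ENNReal.ofReal (1 / C) ≤ μ (⋂ N : ℕ, ⋃ n : ℕ, ⋃ _ : N ≤ n, B n) := by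
  have h_anti : Antitone fun N => ⋃ n, ⋃ _ : N ≤ n, B n := fun N N' h =>
    Set.iUnion₂_mono' fun n hn => ⟨n, h.trans hn, subset_rfl⟩
  rw [h_anti.measure_iInter (fun N => .iUnion fun n => .iUnion fun _ => (hmeas n).nullMeasurableSet)
    ⟨0, measure_ne_top μ _⟩]
  exact le_iInf (ofReal_one_div_le_measure_iUnion_ge hmeas hdiv hC hbound)
end

section
/- Let X be a geodesic metric space, C ≥ 0, γ : [a, b] → X a continuous path from x to y, and ν : I → X a geodesic. Let p = ν(c) and q = ν(d) be nearest-point projections of x and y onto ν with c ≤ d. If γ lies in the C-neighborhood of ν, then ν restricted to [c, d] lies in the 2C-neighborhood of γ. -/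
open Metric Set MeasureTheory

variable {X : Type*} [MetricSpace X]

/-!
Cut `ν(I)` at `ν t` into the half `S₁` before it and the half `S₂` after it. The function
`s ↦ d(γ s, S₁) - d(γ s, S₂)` is `≤ 0` at `a`, since `γ a` projects to `ν c ∈ S₁`, and `≥ 0`
at `b`, so by the intermediate value theorem some `γ s` is equidistant from both halves, hence
at distance `≤ C` from each. A point of a geodesic lying between two points within `r₁` and `r₂`
of `z` is within `r₁ + r₂` of `z`, so `d(ν t, γ s) ≤ 2C`.
-/

theorem min_infDist_le_infDist_of_subset_union {x : X} {s A B : Set X} (h : s ⊆ A ∪ B)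
    (hs : s.Nonempty) : min (infDist x A) (infDist x B) ≤ infDist x s :=
  (le_infDist hs).2 fun _ hy => (h hy).elim
    (fun hA => min_le_of_left_le (infDist_le_dist_of_mem hA))
    (fun hB => min_le_of_right_le (infDist_le_dist_of_mem hB))

theorem ContinuousOn.exists_infDist_eq {γ : ℝ → X} {a b : ℝ} (hab : a ≤ b)
    (hγ : ContinuousOn γ (Icc a b)) {A B : Set X}
    (ha : infDist (γ a) A ≤ infDist (γ a) B) (hb : infDist (γ b) B ≤ infDist (γ b) A) :
    ∃ s ∈ Icc a b, infDist (γ s) A = infDist (γ s) B := by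
  have hf : ContinuousOn (fun s => infDist (γ s) A - infDist (γ s) B) (Icc a b) :=
    ((continuous_infDist_pt A).comp_continuousOn hγ).sub
      ((continuous_infDist_pt B).comp_continuousOn hγ)
  obtain ⟨s, hs, hfs⟩ := intermediate_value_Icc hab hf ⟨sub_nonpos.2 ha, sub_nonneg.2 hb⟩
  exact ⟨s, hs, sub_eq_zero.1 hfs⟩

namespace IsGeodesicOn

variable {ν : ℝ → X} {I : Set ℝ}

theorem dist_le_add_of_le_of_le (hν : IsGeodesicOn ν I) {u t v : ℝ}
    (hu : u ∈ I) (ht : t ∈ I) (hv : v ∈ I) (hut : u ≤ t) (htv : t ≤ v) (z : X) :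
    dist (ν t) z ≤ dist z (ν u) + dist z (ν v) := by
  have htu : dist (ν t) (ν u) = t - u := by rw [hν t ht u hu, abs_of_nonneg (by linarith)]
  have htv' : dist (ν t) (ν v) = v - t := by
    rw [hν t ht v hv, abs_sub_comm, abs_of_nonneg (by linarith)]
  have huv : dist (ν u) (ν v) = v - u := by
    rw [hν u hu v hv, abs_sub_comm, abs_of_nonneg (by linarith)]
  have h₁ := dist_triangle (ν t) (ν u) z
  have h₂ := dist_triangle (ν t) (ν v) z
  have h₃ := dist_triangle (ν u) z (ν v)
  rw [dist_comm (ν u) z] at h₁ h₃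
  rw [dist_comm (ν v) z] at h₂
  linarith

theorem dist_le_infDist_add_infDist (hν : IsGeodesicOn ν I) {t : ℝ} (ht : t ∈ I) (z : X) :
    dist (ν t) z ≤ infDist z (ν '' (I ∩ Iic t)) + infDist z (ν '' (I ∩ Ici t)) := by
  have hne : ∀ J : Set ℝ, t ∈ J → (ν '' (I ∩ J)).Nonempty :=
    fun _ htJ => ⟨ν t, mem_image_of_mem ν ⟨ht, htJ⟩⟩
  rw [← sub_le_iff_le_add, le_infDist (hne _ self_mem_Iic)]
  rintro _ ⟨u, ⟨hu, hut⟩, rfl⟩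
  rw [sub_le_comm, le_infDist (hne _ self_mem_Ici)]
  rintro _ ⟨v, ⟨hv, htv⟩, rfl⟩
  linarith [hν.dist_le_add_of_le_of_le hu ht hv hut htv z]

end IsGeodesicOn

theorem geodesic_in_neighborhood_of_path_general
    (C : ℝ) {a b : ℝ} (hab : a ≤ b) (γ : ℝ → X)
    (hcont : ContinuousOn γ (Set.Icc a b))
    (I : Set ℝ) (ν : ℝ → X) (hν : IsGeodesicOn ν I)
    {c d : ℝ} (hc : c ∈ I) (hd : d ∈ I)
    (hp : dist (γ a) (ν c) = Metric.infDist (γ a) (ν '' I))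
    (hq : dist (γ b) (ν d) = Metric.infDist (γ b) (ν '' I))
    (hnear : ∀ t ∈ Set.Icc a b, Metric.infDist (γ t) (ν '' I) ≤ C) :
    ∀ t ∈ Set.Icc c d ∩ I, Metric.infDist (ν t) (γ '' Set.Icc a b) ≤ 2 * C := by
  rintro t ⟨⟨hct, htd⟩, ht⟩
  set S₁ := ν '' (I ∩ Iic t)
  set S₂ := ν '' (I ∩ Ici t)
  have hS₁ : S₁ ⊆ ν '' I := image_mono inter_subset_left
  have hS₂ : S₂ ⊆ ν '' I := image_mono inter_subset_left
  have hsplit : ν '' I = S₁ ∪ S₂ := by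
    rw [← image_union, ← inter_union_distrib_left, Iic_union_Ici, inter_univ]
  have hνt : ∀ J : Set ℝ, t ∈ J → ν t ∈ ν '' (I ∩ J) :=
    fun _ htJ => mem_image_of_mem ν ⟨ht, htJ⟩
  have ha : infDist (γ a) S₁ ≤ infDist (γ a) S₂ := calc
    infDist (γ a) S₁ ≤ dist (γ a) (ν c) :=
      infDist_le_dist_of_mem (mem_image_of_mem ν ⟨hc, hct⟩)
    _ = infDist (γ a) (ν '' I) := hp
    _ ≤ infDist (γ a) S₂ := infDist_le_infDist_of_subset hS₂ ⟨_, hνt _ self_mem_Ici⟩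
  have hb : infDist (γ b) S₂ ≤ infDist (γ b) S₁ := calc
    infDist (γ b) S₂ ≤ dist (γ b) (ν d) :=
      infDist_le_dist_of_mem (mem_image_of_mem ν ⟨hd, htd⟩)
    _ = infDist (γ b) (ν '' I) := hq
    _ ≤ infDist (γ b) S₁ := infDist_le_infDist_of_subset hS₁ ⟨_, hνt _ self_mem_Iic⟩
  obtain ⟨s, hs, hseq⟩ := hcont.exists_infDist_eq hab ha hb
  have hS₁_le : infDist (γ s) S₁ ≤ infDist (γ s) (ν '' I) := by
    simpa only [hseq, min_self] using
      min_infDist_le_infDist_of_subset_union (x := γ s) hsplit.subset ⟨ν t, t, ht, rfl⟩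
  calc infDist (ν t) (γ '' Icc a b) ≤ dist (ν t) (γ s) :=
        infDist_le_dist_of_mem (mem_image_of_mem γ hs)
    _ ≤ infDist (γ s) S₁ + infDist (γ s) S₂ := hν.dist_le_infDist_add_infDist ht _
    _ ≤ 2 * C := by linarith [hnear s hs]

/-- If a continuous path from `x` to `y` stays in the `C`-neighborhood of a geodesic `ν`,
then `ν` between the projections of `x` and `y` stays in the `2C`-neighborhood of the path. -/
theorem geodesic_in_neighborhood_of_path [ProperSpace X] (hX : GeodesicSpace X)
    (C : ℝ) (hC : 0 ≤ C) {a b : ℝ} (hab : a ≤ b) (γ : ℝ → X)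
    (hcont : ContinuousOn γ (Set.Icc a b))
    (I : Set ℝ) (ν : ℝ → X) (hν : IsGeodesicOn ν I)
    {c d : ℝ} (hc : c ∈ I) (hd : d ∈ I) (hcd : c ≤ d)
    (hp : dist (γ a) (ν c) = Metric.infDist (γ a) (ν '' I))
    (hq : dist (γ b) (ν d) = Metric.infDist (γ b) (ν '' I))
    (hnear : ∀ t ∈ Set.Icc a b, Metric.infDist (γ t) (ν '' I) ≤ C) :
    ∀ t ∈ Set.Icc c d ∩ I, Metric.infDist (ν t) (γ '' Set.Icc a b) ≤ 2 * C :=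
  geodesic_in_neighborhood_of_path_general C hab γ hcont I ν hν hc hd hp hq hnear
end
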